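/- For g = exp(Σ_{i=1}^N x_i H_i), one has g^{-1} E_{1,1} g = E_{1,1} - Σ_{k=2}^{m} x_k E_{k,1}. -/

import Mathlib

open scoped BigOperators
open NormedSpace

attribute [local instance] Matrix.linftyOpSemiNormedRing Matrix.linftyOpNormedRing
  Matrix.linftyOpNormedAlgebra

/-- The `N × N` real matrix unit `E i j` (1-based indices). -/
def E (N : ℕ) (i j : ℕ) : Matrix (Fin N) (Fin N) ℝ :=
  Matrix.of fun a b => if a.val + 1 = i ∧ b.val + 1 = j then 1 else 0

/-- The generators `H_1, …, H_N` of the commutative subalgebra `h^{(m,N)}`. -/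
def H (N m : ℕ) (i : ℕ) : Matrix (Fin N) (Fin N) ℝ :=
  if i = 1 then ∑ k ∈ Finset.Icc 1 m, E N k k
  else if i ≤ m then E N i 1
  else if i ≤ N - 1 then E N i N
  else ∑ k ∈ Finset.Icc (m + 1) N, E N k k


lemma E_mul (N i j k l : ℕ) (hj : 1 ≤ j) (hjN : j ≤ N) :
    E N i j * E N k l = if j = k then E N i l else 0 := by
  ext a b
  rw [Matrix.mul_apply]
  rw [Finset.sum_eq_single (⟨j - 1, by omega⟩ : Fin N)]
  · simp only [E, Matrix.of_apply]
    split_ifs with h1 h2 h3 h4 h5 <;> simp_all <;> omega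
  · intro c _ hc
    simp only [E, Matrix.of_apply]
    have : ¬ (c.val + 1 = j) := by
      intro h; apply hc; apply Fin.ext; simp; omega
    split_ifs <;> simp_all
  · simp

lemma E_mul_eq (N i j l : ℕ) (hj : 1 ≤ j) (hjN : j ≤ N) :
    E N i j * E N j l = E N i l := by rw [E_mul N i j j l hj hjN, if_pos rfl]

lemma E_mul_ne (N i j k l : ℕ) (hj : 1 ≤ j) (hjN : j ≤ N) (h : j ≠ k) :
    E N i j * E N k l = 0 := by rw [E_mul N i j k l hj hjN, if_neg h]

lemma sum_diag_mul_E (N : ℕ) (s : Finset ℕ) (hs : ∀ k ∈ s, 1 ≤ k ∧ k ≤ N) (i j : ℕ) :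
    (∑ k ∈ s, E N k k) * E N i j = if i ∈ s then E N i j else 0 := by
  rw [Finset.sum_mul]
  have h : ∀ k ∈ s, E N k k * E N i j = if k = i then E N i j else 0 := by
    intro k hk
    rw [E_mul N k k i j (hs k hk).1 (hs k hk).2]
    split_ifs with h1 <;> simp [h1]
  rw [Finset.sum_congr rfl h, Finset.sum_ite_eq' s i (fun _ => E N i j)]

lemma E_mul_sum_diag (N : ℕ) (i j : ℕ) (hj : 1 ≤ j) (hjN : j ≤ N) (s : Finset ℕ) :
    E N i j * (∑ k ∈ s, E N k k) = if j ∈ s then E N i j else 0 := by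
  rw [Finset.mul_sum]
  have h : ∀ k ∈ s, E N i j * E N k k = if k = j then E N i j else 0 := by
    intro k hk
    rw [E_mul N i j k k hj hjN]
    by_cases h1 : j = k
    · subst h1; simp
    · rw [if_neg h1, if_neg (Ne.symm h1)]
  rw [Finset.sum_congr rfl h, Finset.sum_ite_eq' s j (fun _ => E N i j)]

lemma pow_proj_nil {𝔸 : Type*} [Ring 𝔸] (P X : 𝔸)
    (hP : P * P = P) (hPX : P * X = X) (hXP : X * P = X) (hXX : X * X = 0)
    (a : ℝ) [Module ℝ 𝔸] [SMulCommClass ℝ 𝔸 𝔸] [IsScalarTower ℝ 𝔸 𝔸] (n : ℕ) :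
    (a • P + X) ^ (n + 1) = a ^ (n + 1) • P + ((n + 1 : ℕ) * a ^ n) • X := by
  induction n with
  | zero => simp
  | succ n ih =>
    rw [pow_succ, ih]
    rw [add_mul, mul_add, mul_add, smul_mul_assoc, smul_mul_assoc, mul_smul_comm,
      mul_smul_comm, smul_mul_assoc, smul_mul_assoc, hP, hPX, hXP, hXX, smul_zero, add_zero,
      smul_smul, smul_smul, pow_succ]
    push_cast
    module

lemma exp_proj_nil {𝔸 : Type*} [NormedRing 𝔸] [NormedAlgebra ℝ 𝔸] [CompleteSpace 𝔸]
    (P X : 𝔸) (hP : P * P = P) (hPX : P * X = X) (hXP : X * P = X) (hXX : X * X = 0)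
    (a : ℝ) :
    exp (a • P + X) = 1 + (Real.exp a - 1) • P + Real.exp a • X := by
  have hsum := expSeries_summable' (𝕂 := ℝ) (a • P + X)
  simp only [exp_eq_tsum ℝ]
  rw [hsum.tsum_eq_zero_add]
  simp only [pow_zero, pow_proj_nil P X hP hPX hXP hXX a]
  have hc : Summable fun n : ℕ => (Nat.factorial (n+1) : ℝ)⁻¹ * a ^ (n + 1) := by
    have := (Real.summable_pow_div_factorial a).comp_injective (Nat.succ_injective)
    simpa [div_eq_mul_inv, mul_comm, Function.comp_def] using this
  have hd : ∀ n : ℕ, (Nat.factorial (n+1) : ℝ)⁻¹ * ((n + 1 : ℕ) * a ^ n)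
      = a ^ n / (Nat.factorial n : ℝ) := by
    intro n
    rw [Nat.factorial_succ]
    push_cast
    rw [mul_inv]
    field_simp
  have hdsum : Summable fun n : ℕ => (Nat.factorial (n+1) : ℝ)⁻¹ * ((n + 1 : ℕ) * a ^ n) := by
    simp only [hd]; exact Real.summable_pow_div_factorial a
  calc (Nat.factorial 0 : ℝ)⁻¹ • (1:𝔸) +
      ∑' n : ℕ, (Nat.factorial (n+1) : ℝ)⁻¹ • (a ^ (n + 1) • P + ((n + 1 : ℕ) * a ^ n) • X)
      = 1 + ((∑' n : ℕ, (Nat.factorial (n+1) : ℝ)⁻¹ * a ^ (n + 1)) • P +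
          (∑' n : ℕ, (Nat.factorial (n+1) : ℝ)⁻¹ * ((n + 1 : ℕ) * a ^ n)) • X) := by
        rw [Nat.factorial_zero]
        simp only [smul_add, smul_smul]
        rw [Summable.tsum_add (hc.smul_const P) (hdsum.smul_const X),
          hc.tsum_smul_const, hdsum.tsum_smul_const]
        norm_num
    _ = 1 + (Real.exp a - 1) • P + Real.exp a • X := by
        have h1 : ∑' n : ℕ, (Nat.factorial (n+1) : ℝ)⁻¹ * a ^ (n + 1) = Real.exp a - 1 := by
          have hexp : Real.exp a = ∑' n : ℕ, a ^ n / (Nat.factorial n : ℝ) := by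
            rw [Real.exp_eq_exp_ℝ, exp_eq_tsum_div]
          have := Summable.tsum_eq_zero_add (f := fun n : ℕ => a ^ n / (Nat.factorial n : ℝ))
            (Real.summable_pow_div_factorial a)
          rw [hexp, this]
          simp [div_eq_mul_inv, mul_comm]
        have h2 : ∑' n : ℕ, (Nat.factorial (n+1) : ℝ)⁻¹ * ((n + 1 : ℕ) * a ^ n)
            = Real.exp a := by
          simp only [hd]
          rw [Real.exp_eq_exp_ℝ, exp_eq_tsum_div]
        rw [h1, h2, add_assoc]

theorem adjoint_E11 (N m : ℕ) (hN : 2 ≤ N) (hm1 : 1 ≤ m) (hm2 : m ≤ N - 1)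
    (x : ℕ → ℝ) :
    (NormedSpace.exp (∑ i ∈ Finset.Icc 1 N, x i • H N m i))⁻¹ * E N 1 1 *
        NormedSpace.exp (∑ i ∈ Finset.Icc 1 N, x i • H N m i) =
      E N 1 1 - ∑ k ∈ Finset.Icc 2 m, x k • E N k 1 := by
  set P1 : Matrix (Fin N) (Fin N) ℝ := ∑ k ∈ Finset.Icc 1 m, E N k k with hP1def
  set P2 : Matrix (Fin N) (Fin N) ℝ := ∑ k ∈ Finset.Icc (m+1) N, E N k k with hP2def
  set X : Matrix (Fin N) (Fin N) ℝ := ∑ k ∈ Finset.Icc 2 m, x k • E N k 1 with hXdef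
  set Y : Matrix (Fin N) (Fin N) ℝ := ∑ j ∈ Finset.Icc (m+1) (N-1), x j • E N j N with hYdef
  have hmem1 : ∀ k ∈ Finset.Icc 1 m, 1 ≤ k ∧ k ≤ N := by
    intro k hk; simp only [Finset.mem_Icc] at hk; omega
  have hmem2 : ∀ k ∈ Finset.Icc (m+1) N, 1 ≤ k ∧ k ≤ N := by
    intro k hk; simp only [Finset.mem_Icc] at hk; omega
  -- basic product relations
  have hP1P1 : P1 * P1 = P1 := by
    rw [hP1def, Finset.mul_sum]
    refine Finset.sum_congr rfl fun k hk => ?_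
    rw [sum_diag_mul_E N _ hmem1, if_pos hk]
  have hP2P2 : P2 * P2 = P2 := by
    rw [hP2def, Finset.mul_sum]
    refine Finset.sum_congr rfl fun k hk => ?_
    rw [sum_diag_mul_E N _ hmem2, if_pos hk]
  have hP1X : P1 * X = X := by
    rw [hXdef, Finset.mul_sum]
    refine Finset.sum_congr rfl fun k hk => ?_
    simp only [Finset.mem_Icc] at hk
    rw [Matrix.mul_smul, sum_diag_mul_E N _ hmem1,
      if_pos (by simp only [Finset.mem_Icc]; omega)]
  have hXP1 : X * P1 = X := by
    rw [hXdef, Finset.sum_mul]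
    refine Finset.sum_congr rfl fun k hk => ?_
    rw [smul_mul_assoc, E_mul_sum_diag N k 1 le_rfl (by omega),
      if_pos (by simp only [Finset.mem_Icc]; omega)]
  have hXX : X * X = 0 := by
    rw [hXdef, Finset.sum_mul]
    refine Finset.sum_eq_zero fun k hk => ?_
    rw [smul_mul_assoc, Finset.mul_sum]
    rw [Finset.sum_eq_zero fun l hl => ?_, smul_zero]
    simp only [Finset.mem_Icc] at hl
    rw [Matrix.mul_smul, E_mul_ne N k 1 l 1 le_rfl (by omega) (by omega), smul_zero]
  have hP2Y : P2 * Y = Y := by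
    rw [hYdef, Finset.mul_sum]
    refine Finset.sum_congr rfl fun j hj => ?_
    simp only [Finset.mem_Icc] at hj
    rw [Matrix.mul_smul, sum_diag_mul_E N _ hmem2,
      if_pos (by simp only [Finset.mem_Icc]; omega)]
  have hYP2 : Y * P2 = Y := by
    rw [hYdef, Finset.sum_mul]
    refine Finset.sum_congr rfl fun j hj => ?_
    rw [smul_mul_assoc, E_mul_sum_diag N j N (by omega) le_rfl,
      if_pos (by simp only [Finset.mem_Icc]; omega)]
  have hYY : Y * Y = 0 := by
    rw [hYdef, Finset.sum_mul]
    refine Finset.sum_eq_zero fun j hj => ?_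
    rw [smul_mul_assoc, Finset.mul_sum]
    rw [Finset.sum_eq_zero fun l hl => ?_, smul_zero]
    simp only [Finset.mem_Icc] at hl
    rw [Matrix.mul_smul, E_mul_ne N j N l N (by omega) le_rfl (by omega), smul_zero]
  have hP1P2 : P1 * P2 = 0 := by
    rw [hP2def, Finset.mul_sum]
    refine Finset.sum_eq_zero fun k hk => ?_
    simp only [Finset.mem_Icc] at hk
    rw [sum_diag_mul_E N _ hmem1, if_neg (by simp only [Finset.mem_Icc]; omega)]
  have hP2P1 : P2 * P1 = 0 := by
    rw [hP1def, Finset.mul_sum]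
    refine Finset.sum_eq_zero fun k hk => ?_
    simp only [Finset.mem_Icc] at hk
    rw [sum_diag_mul_E N _ hmem2, if_neg (by simp only [Finset.mem_Icc]; omega)]
  have hP1Y : P1 * Y = 0 := by
    rw [hYdef, Finset.mul_sum]
    refine Finset.sum_eq_zero fun j hj => ?_
    simp only [Finset.mem_Icc] at hj
    rw [Matrix.mul_smul, sum_diag_mul_E N _ hmem1,
      if_neg (by simp only [Finset.mem_Icc]; omega), smul_zero]
  have hP2X : P2 * X = 0 := by
    rw [hXdef, Finset.mul_sum]
    refine Finset.sum_eq_zero fun k hk => ?_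
    simp only [Finset.mem_Icc] at hk
    rw [Matrix.mul_smul, sum_diag_mul_E N _ hmem2,
      if_neg (by simp only [Finset.mem_Icc]; omega), smul_zero]
  have hXP2 : X * P2 = 0 := by
    rw [hXdef, Finset.sum_mul]
    refine Finset.sum_eq_zero fun k hk => ?_
    rw [smul_mul_assoc, E_mul_sum_diag N k 1 le_rfl (by omega),
      if_neg (by simp only [Finset.mem_Icc]; omega), smul_zero]
  have hYP1 : Y * P1 = 0 := by
    rw [hYdef, Finset.sum_mul]
    refine Finset.sum_eq_zero fun j hj => ?_
    rw [smul_mul_assoc, E_mul_sum_diag N j N (by omega) le_rfl,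
      if_neg (by simp only [Finset.mem_Icc]; omega), smul_zero]
  have hXY : X * Y = 0 := by
    rw [hXdef, Finset.sum_mul]
    refine Finset.sum_eq_zero fun k hk => ?_
    rw [smul_mul_assoc, hYdef, Finset.mul_sum]
    rw [Finset.sum_eq_zero fun l hl => ?_, smul_zero]
    simp only [Finset.mem_Icc] at hl
    rw [Matrix.mul_smul, E_mul_ne N k 1 l N le_rfl (by omega) (by omega), smul_zero]
  have hYX : Y * X = 0 := by
    rw [hYdef, Finset.sum_mul]
    refine Finset.sum_eq_zero fun j hj => ?_
    rw [smul_mul_assoc, hXdef, Finset.mul_sum]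
    rw [Finset.sum_eq_zero fun l hl => ?_, smul_zero]
    simp only [Finset.mem_Icc] at hl
    rw [Matrix.mul_smul, E_mul_ne N j N l 1 (by omega) le_rfl (by omega), smul_zero]
  -- relations with E11
  have hP1E : P1 * E N 1 1 = E N 1 1 := by
    rw [sum_diag_mul_E N _ hmem1, if_pos (by simp only [Finset.mem_Icc]; omega)]
  have hEP1 : E N 1 1 * P1 = E N 1 1 := by
    rw [E_mul_sum_diag N 1 1 le_rfl (by omega),
      if_pos (by simp only [Finset.mem_Icc]; omega)]
  have hP2E : P2 * E N 1 1 = 0 := by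
    rw [sum_diag_mul_E N _ hmem2, if_neg (by simp only [Finset.mem_Icc]; omega)]
  have hEP2 : E N 1 1 * P2 = 0 := by
    rw [E_mul_sum_diag N 1 1 le_rfl (by omega),
      if_neg (by simp only [Finset.mem_Icc]; omega)]
  have hXE : X * E N 1 1 = X := by
    rw [hXdef, Finset.sum_mul]
    refine Finset.sum_congr rfl fun k hk => ?_
    rw [smul_mul_assoc, E_mul_eq N k 1 1 le_rfl (by omega)]
  have hEX : E N 1 1 * X = 0 := by
    rw [hXdef, Finset.mul_sum]
    refine Finset.sum_eq_zero fun k hk => ?_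
    simp only [Finset.mem_Icc] at hk
    rw [Matrix.mul_smul, E_mul_ne N 1 1 k 1 le_rfl (by omega) (by omega), smul_zero]
  have hYE : Y * E N 1 1 = 0 := by
    rw [hYdef, Finset.sum_mul]
    refine Finset.sum_eq_zero fun j hj => ?_
    rw [smul_mul_assoc, E_mul_ne N j N 1 1 (by omega) le_rfl (by omega), smul_zero]
  have hEY : E N 1 1 * Y = 0 := by
    rw [hYdef, Finset.mul_sum]
    refine Finset.sum_eq_zero fun j hj => ?_
    simp only [Finset.mem_Icc] at hj
    rw [Matrix.mul_smul, E_mul_ne N 1 1 j N le_rfl (by omega) (by omega), smul_zero]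
  -- decomposition of the sum
  have hsplit : Finset.Icc 1 N
      = insert 1 (insert N (Finset.Icc 2 m ∪ Finset.Icc (m+1) (N-1))) := by
    ext a
    simp only [Finset.mem_Icc, Finset.mem_insert, Finset.mem_union]
    omega
  have hA : ∑ i ∈ Finset.Icc 1 N, x i • H N m i
      = (x 1 • P1 + X) + (x N • P2 + Y) := by
    rw [hsplit, Finset.sum_insert (by
        simp only [Finset.mem_insert, Finset.mem_union, Finset.mem_Icc]; omega),
      Finset.sum_insert (by
        simp only [Finset.mem_union, Finset.mem_Icc]; omega),
      Finset.sum_union (by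
        rw [Finset.disjoint_left]
        intro a ha hb
        simp only [Finset.mem_Icc] at ha hb
        omega)]
    have hH1 : H N m 1 = P1 := by rw [H, if_pos rfl]
    have hHN : H N m N = P2 := by
      rw [H, if_neg (by omega), if_neg (by omega), if_neg (by omega)]
    have hX' : ∑ i ∈ Finset.Icc 2 m, x i • H N m i = X := by
      rw [hXdef]
      refine Finset.sum_congr rfl fun k hk => ?_
      simp only [Finset.mem_Icc] at hk
      rw [H, if_neg (by omega), if_pos hk.2]
    have hY' : ∑ i ∈ Finset.Icc (m+1) (N-1), x i • H N m i = Y := by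
      rw [hYdef]
      refine Finset.sum_congr rfl fun j hj => ?_
      simp only [Finset.mem_Icc] at hj
      rw [H, if_neg (by omega), if_neg (by omega), if_pos hj.2]
    rw [hH1, hHN, hX', hY']
    abel
  -- exponential computations
  have hM1 : exp (x 1 • P1 + X)
      = 1 + (Real.exp (x 1) - 1) • P1 + Real.exp (x 1) • X :=
    exp_proj_nil P1 X hP1P1 hP1X hXP1 hXX (x 1)
  have hM1' : exp ((-(x 1)) • P1 + (-X))
      = 1 + (Real.exp (-(x 1)) - 1) • P1 + Real.exp (-(x 1)) • (-X) :=
    exp_proj_nil P1 (-X) hP1P1 (by rw [mul_neg, hP1X]) (by rw [neg_mul, hXP1])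
      (by simp [neg_mul, mul_neg, hXX]) (-(x 1))
  have hM2 : exp (x N • P2 + Y)
      = 1 + (Real.exp (x N) - 1) • P2 + Real.exp (x N) • Y :=
    exp_proj_nil P2 Y hP2P2 hP2Y hYP2 hYY (x N)
  have hM2' : exp ((-(x N)) • P2 + (-Y))
      = 1 + (Real.exp (-(x N)) - 1) • P2 + Real.exp (-(x N)) • (-Y) :=
    exp_proj_nil P2 (-Y) hP2P2 (by rw [mul_neg, hP2Y]) (by rw [neg_mul, hYP2])
      (by simp [neg_mul, mul_neg, hYY]) (-(x N))
  have hz1 : (x 1 • P1 + X) * (x N • P2 + Y) = 0 := by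
    simp [mul_add, add_mul, smul_mul_assoc, Matrix.mul_smul, hP1P2, hP1Y, hXP2, hXY]
  have hz2 : (x N • P2 + Y) * (x 1 • P1 + X) = 0 := by
    simp [mul_add, add_mul, smul_mul_assoc, Matrix.mul_smul, hP2P1, hP2X, hYP1, hYX]
  have hcomm : Commute (x 1 • P1 + X) (x N • P2 + Y) := hz1.trans hz2.symm
  have hcomm' : Commute (-(x 1 • P1 + X)) (-(x N • P2 + Y)) := hcomm.neg_left.neg_right
  have hexpA : exp ((x 1 • P1 + X) + (x N • P2 + Y))
      = exp (x 1 • P1 + X) * exp (x N • P2 + Y) :=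
    Matrix.exp_add_of_commute _ _ hcomm
  have hexpA' : exp (-((x 1 • P1 + X) + (x N • P2 + Y)))
      = exp ((-(x 1)) • P1 + (-X)) * exp ((-(x N)) • P2 + (-Y)) := by
    have h0 : -((x 1 • P1 + X) + (x N • P2 + Y))
        = (-(x 1 • P1 + X)) + (-(x N • P2 + Y)) := by abel
    rw [h0, Matrix.exp_add_of_commute _ _ hcomm']
    congr 1
    · congr 1
      rw [neg_smul, ← neg_add]
    · congr 1
      rw [neg_smul, ← neg_add]
  have key : ∀ a : ℝ, (E N 1 1 - X) * (1 + (a - 1) • P1 + a • X) = a • (E N 1 1 - X) := by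
    intro a
    rw [mul_add, mul_add, mul_one, Matrix.mul_smul, Matrix.mul_smul, sub_mul, sub_mul,
      hEP1, hXP1, hEX, hXX, sub_zero]
    module
  have s1 : exp ((-(x N)) • P2 + (-Y)) * E N 1 1 = E N 1 1 := by
    rw [hM2', add_mul, add_mul, one_mul, smul_mul_assoc, smul_mul_assoc, neg_mul, hP2E, hYE,
      neg_zero, smul_zero, smul_zero, add_zero, add_zero]
  have s2 : exp ((-(x 1)) • P1 + (-X)) * E N 1 1 * exp (x 1 • P1 + X)
      = E N 1 1 - X := by
    rw [hM1', hM1]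
    have h1 : (1 + (Real.exp (-(x 1)) - 1) • P1 + Real.exp (-(x 1)) • (-X)) * E N 1 1
        = Real.exp (-(x 1)) • (E N 1 1 - X) := by
      rw [add_mul, add_mul, one_mul, smul_mul_assoc, smul_mul_assoc, neg_mul, hP1E, hXE]
      module
    rw [h1, smul_mul_assoc, key, smul_smul, ← Real.exp_add, neg_add_cancel, Real.exp_zero,
      one_smul]
  have s3 : (E N 1 1 - X) * exp (x N • P2 + Y) = E N 1 1 - X := by
    rw [hM2, mul_add, mul_add, mul_one, Matrix.mul_smul, Matrix.mul_smul, sub_mul, sub_mul,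
      hEP2, hXP2, hEY, hXY, sub_zero]
    module
  rw [hA, ← Matrix.exp_neg, hexpA', hexpA,
    mul_assoc (exp ((-(x 1)) • P1 + (-X))) (exp ((-(x N)) • P2 + (-Y))) (E N 1 1),
    s1, ← mul_assoc, s2, s3]
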